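/- Let 0<q<1 and ν real, and let h(z) = (-q²z²;q²)_∞/(-q^{-2ν+1}z²;q²)_∞. Then h satisfies z²(-q^{-2ν+1} h(z) + q² h(qz)) = h(z) - h(qz) for all complex z where defined, and for real z it is everywhere defined and positive. -/

import Mathlib

/-- The infinite q-Pochhammer symbol `(x;q)_∞ = ∏_{n≥0} (1 - x q^n)`. -/
noncomputable def qp (q x : ℂ) : ℂ := ∏' n : ℕ, (1 - x * q ^ n)

/-- The infinite q-Pochhammer symbol over the reals. -/
noncomputable def qpR (q x : ℝ) : ℝ := ∏' n : ℕ, (1 - x * q ^ n)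

/-- `h(z) = (-q²z²;q²)_∞ / (-q^{-2ν+1}z²;q²)_∞` (complex version). -/
noncomputable def hh (q ν : ℝ) (z : ℂ) : ℂ :=
  qp ((q : ℂ) ^ 2) (-((q : ℂ) ^ 2 * z ^ 2)) /
    qp ((q : ℂ) ^ 2) (-(((q ^ (-2 * ν + 1) : ℝ) : ℂ) * z ^ 2))

/-- `h` restricted to real arguments. -/
noncomputable def hhR (q ν : ℝ) (x : ℝ) : ℝ :=
  qpR (q ^ 2) (-(q ^ 2 * x ^ 2)) / qpR (q ^ 2) (-(q ^ (-2 * ν + 1) * x ^ 2))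

/-! With `Q = q²`, both products obey `(x;Q)_∞ = (1 - x) (Qx;Q)_∞`, so
`h(z) (1 + q^{-2ν+1} z²) = (1 + q² z²) h(qz)`, which is the q-difference equation rearranged.
For real `z` every factor of numerator and denominator is at least `1`. -/

lemma multipliable_one_sub_mul_pow {q : ℂ} (x : ℂ) (hq : ‖q‖ < 1) :
    Multipliable fun n : ℕ => 1 - x * q ^ n := by
  simpa [sub_eq_add_neg] using multipliable_one_add_of_summable (f := fun n : ℕ => -(x * q ^ n))
    (by simpa [norm_mul, norm_pow] using
      (summable_geometric_of_lt_one (norm_nonneg q) hq).mul_left ‖x‖)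

lemma qp_eq_one_sub_mul_qp_mul {q : ℂ} (x : ℂ) (hq : ‖q‖ < 1) :
    qp q x = (1 - x) * qp q (q * x) := by
  have hm : Multipliable fun n : ℕ => 1 - x * q ^ (n + 1) :=
    (multipliable_one_sub_mul_pow (x * q) hq).congr fun n => by ring
  have h := tprod_eq_zero_mul' (f := fun n : ℕ => 1 - x * q ^ n) hm
  rw [qp, qp, h, pow_zero, mul_one]
  congr 1
  exact tprod_congr fun n => by ring

lemma one_le_qpR_neg {q c : ℝ} (hq : 0 ≤ q) (hc : 0 ≤ c) : 1 ≤ qpR q (-c) := by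
  by_cases hm : Multipliable fun n : ℕ => 1 - -c * q ^ n
  · refine ge_of_tendsto' hm.hasProd fun s => Finset.one_le_prod fun n _ => ?_
    nlinarith [mul_nonneg hc (pow_nonneg hq n)]
  · rw [qpR, tprod_eq_one_of_not_multipliable hm]

lemma qp_sq_neg_mul_sq {q : ℝ} (hq : |q| < 1) (c z : ℂ) :
    qp ((q : ℂ) ^ 2) (-(c * z ^ 2)) =
      (1 + c * z ^ 2) * qp ((q : ℂ) ^ 2) (-(c * ((q : ℂ) * z) ^ 2)) := by
  have hq2 : ‖(q : ℂ) ^ 2‖ < 1 := by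
    rw [norm_pow, Complex.norm_real, Real.norm_eq_abs]
    exact pow_lt_one₀ (abs_nonneg q) hq two_ne_zero
  rw [qp_eq_one_sub_mul_qp_mul _ hq2]
  ring_nf

lemma hh_mul_one_add_mul_sq {q : ℝ} (ν : ℝ) (hq : |q| < 1) (z : ℂ)
    (hD : qp ((q : ℂ) ^ 2) (-(((q ^ (-2 * ν + 1) : ℝ) : ℂ) * z ^ 2)) ≠ 0) :
    hh q ν z * (1 + ((q ^ (-2 * ν + 1) : ℝ) : ℂ) * z ^ 2) =
      (1 + (q : ℂ) ^ 2 * z ^ 2) * hh q ν ((q : ℂ) * z) := by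
  rw [qp_sq_neg_mul_sq hq] at hD
  have ha : 1 + ((q ^ (-2 * ν + 1) : ℝ) : ℂ) * z ^ 2 ≠ 0 := left_ne_zero_of_mul hD
  rw [hh, hh, qp_sq_neg_mul_sq hq _ z, qp_sq_neg_mul_sq hq _ z]
  generalize qp ((q : ℂ) ^ 2) (-((q : ℂ) ^ 2 * ((q : ℂ) * z) ^ 2)) = N
  generalize qp ((q : ℂ) ^ 2) (-(((q ^ (-2 * ν + 1) : ℝ) : ℂ) * ((q : ℂ) * z) ^ 2)) = D at hD ⊢
  generalize ((q ^ (-2 * ν + 1) : ℝ) : ℂ) = a at *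
  rw [mul_comm (1 + a * z ^ 2) D, ← div_div, div_mul_cancel₀ _ ha, mul_div_assoc]

theorem stmt13 (q ν : ℝ) (hq0 : 0 < q) (hq1 : q < 1) :
    (∀ z : ℂ,
      qp ((q : ℂ) ^ 2) (-(((q ^ (-2 * ν + 1) : ℝ) : ℂ) * z ^ 2)) ≠ 0 →
      qp ((q : ℂ) ^ 2) (-(((q ^ (-2 * ν + 1) : ℝ) : ℂ) * ((q : ℂ) * z) ^ 2)) ≠ 0 →
      z ^ 2 * (-((q ^ (-2 * ν + 1) : ℝ) : ℂ) * hh q ν z + (q : ℂ) ^ 2 * hh q ν ((q : ℂ) * z)) =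
        hh q ν z - hh q ν ((q : ℂ) * z)) ∧
    (∀ x : ℝ, qpR (q ^ 2) (-(q ^ (-2 * ν + 1) * x ^ 2)) ≠ 0 ∧ 0 < hhR q ν x) := by
  refine ⟨fun z hD _ => ?_, fun x => ?_⟩
  · have hq : |q| < 1 := abs_lt.2 ⟨by linarith, hq1⟩
    linear_combination -(hh_mul_one_add_mul_sq ν hq z hD)
  · have hnum := one_le_qpR_neg (sq_nonneg q) (by positivity : 0 ≤ q ^ 2 * x ^ 2)
    have hden := one_le_qpR_neg (sq_nonneg q) (by positivity : 0 ≤ q ^ (-2 * ν + 1) * x ^ 2)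
    exact ⟨by linarith, div_pos (by linarith) (by linarith)⟩
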